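/- arXiv:1401.5905 — 8 statements merged into one kernel-verified Lean document; each statement's English description precedes it below -/
import Mathlib

section
/- Let ABC and ABD be triangles sharing side AB with AC = AD and ∠ABC = ∠ABD. Then either BC = BD (so the triangles are congruent), or ∠ACB + ∠ADB = π. -/
/-!
By the law of cosines at `B`, both `x = BC` and `x = BD` solve `AC² = AB² + x² - 2·AB·x·cos ∠B`,
a quadratic in `x`. If `BC ≠ BD` they are its two roots, so Vieta gives `BC + BD = 2·AB·cos ∠B`
and `BC·BD = AB² - AC²`. Substituting these into the laws of cosines at `C` and at `D` shows
`cos ∠ACB + cos ∠ADB = 0`, and two angles in `[0, π]` with opposite cosines add up to `π`.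
-/

open EuclideanGeometry

lemma add_eq_and_mul_eq_of_quadratic_roots {a b c d k : ℝ}
    (hc : b * b = a * a + c * c - 2 * a * c * k) (hd : b * b = a * a + d * d - 2 * a * d * k)
    (hcd : c ≠ d) : c + d = 2 * a * k ∧ c * d = a * a - b * b := by
  have hsum : c + d = 2 * a * k := by
    have h : (c - d) * (c + d - 2 * a * k) = 0 := by linear_combination hd - hc
    linarith [(mul_eq_zero.1 h).resolve_left (sub_ne_zero.2 hcd)]
  exact ⟨hsum, by linear_combination hc + c * hsum⟩

lemma Real.add_eq_pi_of_cos_add_cos_eq_zero {x y : ℝ} (hx₀ : 0 ≤ x) (hxπ : x ≤ Real.pi)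
    (hy₀ : 0 ≤ y) (hyπ : y ≤ Real.pi) (h : Real.cos x + Real.cos y = 0) : x + y = Real.pi := by
  have hcos : Real.cos y = Real.cos (Real.pi - x) := by
    rw [Real.cos_pi_sub]
    linarith
  have := Real.injOn_cos ⟨hy₀, hyπ⟩ ⟨by linarith, by linarith⟩ hcos
  linarith

section

variable {V P : Type*} [NormedAddCommGroup V] [InnerProductSpace ℝ V] [MetricSpace P]
  [NormedAddTorsor V P]

theorem EuclideanGeometry.cos_angle_add_cos_angle_eq_zero_of_dist_ne {A B C D : P}
    (hAC : A ≠ C) (hBC : B ≠ C) (hBD : B ≠ D) (hACD : dist A C = dist A D)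
    (hang : ∠ A B C = ∠ A B D) (hCD : dist B C ≠ dist B D) :
    Real.cos (∠ A C B) + Real.cos (∠ A D B) = 0 := by
  have lawB_C := law_cos A B C
  have lawB_D := law_cos A B D
  have lawC := law_cos A C B
  have lawD := law_cos A D B
  rw [dist_comm C B] at lawB_C
  rw [← hang, ← hACD, dist_comm D B] at lawB_D
  rw [← hACD] at lawD
  obtain ⟨hsum, hprod⟩ := add_eq_and_mul_eq_of_quadratic_roots lawB_C lawB_D hCD
  have key : 2 * dist A C * dist B C * dist B D *
      (Real.cos (∠ A C B) + Real.cos (∠ A D B)) = 0 := by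
    linear_combination dist B D * lawC + dist B C * lawD + (dist B C + dist B D) * hprod
  have hpos : 0 < 2 * dist A C * dist B C * dist B D := by
    have := dist_pos.2 hAC
    have := dist_pos.2 hBC
    have := dist_pos.2 hBD
    positivity
  exact (mul_eq_zero.1 key).resolve_left hpos.ne'

theorem EuclideanGeometry.dist_eq_or_angle_add_angle_eq_pi {A B C D : P}
    (hAC : A ≠ C) (hBC : B ≠ C) (hBD : B ≠ D) (hACD : dist A C = dist A D)
    (hang : ∠ A B C = ∠ A B D) :
    dist B C = dist B D ∨ ∠ A C B + ∠ A D B = Real.pi := by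
  refine or_iff_not_imp_left.2 fun hCD => ?_
  exact Real.add_eq_pi_of_cos_add_cos_eq_zero (angle_nonneg A C B) (angle_le_pi A C B)
    (angle_nonneg A D B) (angle_le_pi A D B)
    (cos_angle_add_cos_angle_eq_zero_of_dist_ne hAC hBC hBD hACD hang hCD)

end

theorem stmt1 (A B C D : EuclideanSpace ℝ (Fin 2))
    (hABC : AffineIndependent ℝ ![A, B, C])
    (hABD : AffineIndependent ℝ ![A, B, D])
    (hAC : dist A C = dist A D)
    (hang : ∠ A B C = ∠ A B D) :
    dist B C = dist B D ∨ ∠ A C B + ∠ A D B = Real.pi := by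
  have hA_ne_C : A ≠ C := by simpa using hABC.injective.ne (show (0 : Fin 3) ≠ 2 by decide)
  have hB_ne_C : B ≠ C := by simpa using hABC.injective.ne (show (1 : Fin 3) ≠ 2 by decide)
  have hB_ne_D : B ≠ D := by simpa using hABD.injective.ne (show (1 : Fin 3) ≠ 2 by decide)
  exact dist_eq_or_angle_add_angle_eq_pi hA_ne_C hB_ne_C hB_ne_D hAC hang
end

section
/- Let F, D, E be the midpoints of sides BC, CA, AB of triangle ABC, and let G be the circumcenter of triangle FDE. If G lies on the internal bisector of angle ACB, then either CA = CB, or ∠ACB = 60°. -/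
/-!
Put `a = BC`, `b = CA`, `c = AB`, and let `θ` be the common angle `∠ACG = ∠BCG`. By Apollonius's
theorem, `G` being equidistant from the midpoints of `BC`, `CA`, `AB` says
`GB² - GA² = (a² - b²) / 2` and `GC² - GB² = (b² - c²) / 2`. With `k = CG cos θ`, the law of
cosines in the triangles `ACG` and `BCG` turns the first relation into `(a - b)(a + b - 4k) = 0`.
So either `a = b`, or `4k = a + b`, and then the second relation becomes `c² = a² + b² - ab`,
that is `cos C = 1/2`.
-/

open EuclideanGeometry

variable {V P : Type*} [NormedAddCommGroup V] [InnerProductSpace ℝ V] [MetricSpace P]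
  [NormedAddTorsor V P]

theorem dist_sq_sub_dist_sq_of_dist_midpoint_eq {G X Y Z : P}
    (h : dist G (midpoint ℝ X Z) = dist G (midpoint ℝ Y Z)) :
    dist G X ^ 2 - dist G Y ^ 2 = (dist X Z ^ 2 - dist Y Z ^ 2) / 2 := by
  have hX := dist_sq_add_dist_sq_eq_two_mul_dist_midpoint_sq_add_half_dist_sq G X Z
  have hY := dist_sq_add_dist_sq_eq_two_mul_dist_midpoint_sq_add_half_dist_sq G Y Z
  rw [h] at hX
  linear_combination hX - hY

theorem dist_sq_sub_dist_sq_of_angle_eq {A B C G : P} (h : ∠ A C G = ∠ B C G) :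
    dist G A ^ 2 - dist G B ^ 2 =
      (dist A C - dist B C) * (dist A C + dist B C - 2 * dist G C * Real.cos (∠ A C G)) := by
  have hA := law_cos A C G
  have hB := law_cos B C G
  rw [← h] at hB
  rw [dist_comm G A, dist_comm G B]
  linear_combination hA - hB

theorem angle_eq_pi_div_three_of_dist_sq {A B C : P} (hAC : A ≠ C) (hBC : B ≠ C)
    (h : dist A B ^ 2 = dist A C ^ 2 + dist B C ^ 2 - dist A C * dist B C) :
    ∠ A C B = Real.pi / 3 := by
  have hcos : Real.cos (∠ A C B) = Real.cos (Real.pi / 3) := by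
    have hpos : 0 < dist A C * dist B C := mul_pos (dist_pos.mpr hAC) (dist_pos.mpr hBC)
    rw [Real.cos_pi_div_three]
    refine mul_left_cancel₀ hpos.ne' ?_
    linear_combination (law_cos A C B - h) / 2
  exact Real.injOn_cos ⟨angle_nonneg A C B, angle_le_pi A C B⟩
    ⟨by positivity, by linarith [Real.pi_pos]⟩ hcos

theorem stmt6_general (A B C G : EuclideanSpace ℝ (Fin 2))
    (hABC : AffineIndependent ℝ ![A, B, C])
    (F : EuclideanSpace ℝ (Fin 2)) (hF : F = midpoint ℝ B C)
    (D : EuclideanSpace ℝ (Fin 2)) (hD : D = midpoint ℝ C A)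
    (E : EuclideanSpace ℝ (Fin 2)) (hE : E = midpoint ℝ A B)
    (hGF : dist G F = dist G D) (hGD : dist G D = dist G E)
    (hbis : ∠ A C G = ∠ B C G) :
    dist C A = dist C B ∨ ∠ A C B = Real.pi / 3 := by
  subst hF hD hE
  have hAC : A ≠ C := by simpa using hABC.injective.ne (by decide : (0 : Fin 3) ≠ 2)
  have hBC : B ≠ C := by simpa using hABC.injective.ne (by decide : (1 : Fin 3) ≠ 2)
  rw [midpoint_comm C A] at hGF
  rw [midpoint_comm A B] at hGD
  have hBA : dist G B ^ 2 - dist G A ^ 2 = (dist B C ^ 2 - dist A C ^ 2) / 2 :=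
    dist_sq_sub_dist_sq_of_dist_midpoint_eq hGF
  have hCB : dist G C ^ 2 - dist G B ^ 2 = (dist C A ^ 2 - dist B A ^ 2) / 2 :=
    dist_sq_sub_dist_sq_of_dist_midpoint_eq hGD
  have hAB : dist G A ^ 2 - dist G B ^ 2 =
      (dist A C - dist B C) * (dist A C + dist B C - 2 * dist G C * Real.cos (∠ A C G)) :=
    dist_sq_sub_dist_sq_of_angle_eq hbis
  rw [dist_comm C A, dist_comm C B]
  by_cases hab : dist A C = dist B C
  · exact Or.inl hab
  · right
    have hk : dist A C + dist B C = 4 * (dist G C * Real.cos (∠ A C G)) :=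
      mul_left_cancel₀ (sub_ne_zero.mpr hab) (by linear_combination -2 * hAB - 2 * hBA)
    have hBG := law_cos B C G
    rw [dist_comm B G, ← hbis] at hBG
    rw [dist_comm C A, dist_comm B A] at hCB
    exact angle_eq_pi_div_three_of_dist_sq hAC hBC
      (by linear_combination 2 * hCB + 2 * hBG + dist B C * hk)

theorem stmt6 (A B C G : EuclideanSpace ℝ (Fin 2))
    (hABC : AffineIndependent ℝ ![A, B, C])
    (F : EuclideanSpace ℝ (Fin 2)) (hF : F = midpoint ℝ B C)
    (D : EuclideanSpace ℝ (Fin 2)) (hD : D = midpoint ℝ C A)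
    (E : EuclideanSpace ℝ (Fin 2)) (hE : E = midpoint ℝ A B)
    (hGF : dist G F = dist G D) (hGD : dist G D = dist G E)
    (hGC : G ≠ C)
    (hbis : ∠ A C G = ∠ B C G) :
    dist C A = dist C B ∨ ∠ A C B = Real.pi / 3 :=
  stmt6_general A B C G hABC F hF D hD E hE hGF hGD hbis
end

section
/- In triangle ABC, let AA₁ (A₁ on BC) and BB₁ (B₁ on AC) be the internal bisectors of angles CAB and CBA, meeting at the incenter J. If JA₁ = JB₁, then either CA = CB or ∠ACB = 60°. -/
/-!
The incenter `J` is at distance `r` (the inradius) from every side, so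
`JA₁ · sin ∠BA₁A = r = JB₁ · sin ∠AB₁B`, and `JA₁ = JB₁` forces `sin ∠BA₁A = sin ∠AB₁B`.
With `α = ∠A`, `β = ∠B` we have `∠BA₁A = π - β - α/2` and `∠AB₁B = π - α - β/2`, so these two
angles are either equal, whence `α = β`, or supplementary, whence `3(α + β)/2 = π`, i.e. `∠C = π/3`.
-/

open EuclideanGeometry Real

theorem Real.eq_or_add_eq_pi_of_sin_eq_sin {x y : ℝ} (hx₀ : 0 < x) (hxπ : x < π) (hy₀ : 0 < y)
    (hyπ : y < π) (h : sin x = sin y) : x = y ∨ x + y = π := by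
  have hprod : sin ((x - y) / 2) * cos ((x + y) / 2) = 0 := by
    linarith [Real.sin_sub_sin x y]
  rcases mul_eq_zero.1 hprod with hsin | hcos
  · left
    have := (sin_eq_zero_iff_of_lt_of_lt (by linarith) (by linarith)).1 hsin
    linarith
  · right
    have := injOn_cos ⟨by linarith, by linarith⟩ ⟨by linarith, by linarith⟩
      (hcos.trans cos_pi_div_two.symm)
    linarith

section Bisectors

variable {V P : Type*} [NormedAddCommGroup V] [InnerProductSpace ℝ V] [MetricSpace P]
  [NormedAddTorsor V P] {A B C A₁ B₁ J : P}

theorem angle_add_angle_add_half_angle_eq_pi_of_bisector (hAB : A ≠ B)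
    (hA₁ : Sbtw ℝ B A₁ C) (hbis : ∠ B A A₁ = ∠ C A A₁) :
    ∠ B A₁ A + ∠ A B C + ∠ B A C / 2 = π := by
  have hsum := angle_add_angle_add_angle_eq_pi A₁ hAB.symm
  have hhalf := angle_add_angle_eq_of_sbtw (p := A) hA₁
  rw [hA₁.angle_eq_right A, angle_comm A₁ A B] at hsum
  rw [angle_comm A₁ A C, ← hbis] at hhalf
  linarith

-- Both sides are the distance from `J` to the line `BC`.
theorem sin_angle_mul_dist_eq_of_angle_bisector (hA₁ : Sbtw ℝ B A₁ C)
    (hbis : ∠ A B B₁ = ∠ C B B₁) (hJA : Sbtw ℝ A J A₁) (hJB : Sbtw ℝ B J B₁) :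
    sin (∠ B A₁ A) * dist J A₁ = sin (∠ A B B₁) * dist J B := by
  have h := law_sin B A₁ J
  rwa [hJA.symm.angle_eq_right, hJB.angle_eq_left, hA₁.angle_eq_right, angle_comm B₁ B C,
    ← hbis, dist_comm A₁ J] at h

theorem sin_angle_mul_dist_eq_of_angle_bisectors
    (hA₁ : Sbtw ℝ B A₁ C) (hbisA : ∠ B A A₁ = ∠ C A A₁)
    (hB₁ : Sbtw ℝ A B₁ C) (hbisB : ∠ A B B₁ = ∠ C B B₁)
    (hJA : Sbtw ℝ A J A₁) (hJB : Sbtw ℝ B J B₁) :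
    sin (∠ B A₁ A) * dist J A₁ = sin (∠ A B₁ B) * dist J B₁ := by
  have hBC := sin_angle_mul_dist_eq_of_angle_bisector hA₁ hbisB hJA hJB
  have hAC := sin_angle_mul_dist_eq_of_angle_bisector hB₁ hbisA hJB hJA
  have hAB := law_sin A B J
  rw [hJB.angle_eq_right, hJA.angle_eq_left, angle_comm A₁ A B, dist_comm B J] at hAB
  linarith

end Bisectors

theorem stmt7 (A B C A₁ B₁ J : EuclideanSpace ℝ (Fin 2))
    (hABC : AffineIndependent ℝ ![A, B, C])
    (hA₁ : Sbtw ℝ B A₁ C) (hbisA : ∠ B A A₁ = ∠ C A A₁)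
    (hB₁ : Sbtw ℝ A B₁ C) (hbisB : ∠ A B B₁ = ∠ C B B₁)
    (hJA : J ∈ affineSpan ℝ ({A, A₁} : Set (EuclideanSpace ℝ (Fin 2))))
    (hJB : J ∈ affineSpan ℝ ({B, B₁} : Set (EuclideanSpace ℝ (Fin 2))))
    (hJ : dist J A₁ = dist J B₁) :
    dist C A = dist C B ∨ ∠ A C B = Real.pi / 3 := by
  let t : Affine.Triangle ℝ (EuclideanSpace ℝ (Fin 2)) := ⟨![A, B, C], hABC⟩
  have hJA' : Sbtw ℝ A J A₁ := sbtw_of_sbtw_of_sbtw_of_mem_affineSpan_pair (t := t)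
    (i₁ := 0) (i₂ := 1) (i₃ := 2) (by decide) hA₁ hB₁ hJA hJB
  have hJB' : Sbtw ℝ B J B₁ := sbtw_of_sbtw_of_sbtw_of_mem_affineSpan_pair (t := t)
    (i₁ := 1) (i₂ := 0) (i₃ := 2) (by decide) hB₁ hA₁ hJB hJA
  have hncol : ¬Collinear ℝ {A, B, C} := affineIndependent_iff_not_collinear_set.1 hABC
  have hAB : A ≠ B := ne₁₂_of_not_collinear hncol
  have hα : 0 < ∠ B A C := angle_pos_of_not_collinear (by rwa [Set.insert_comm])
  have hβ : 0 < ∠ A B C := angle_pos_of_not_collinear hncol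
  have hγ : 0 ≤ ∠ A C B := angle_nonneg A C B
  have hsum := angle_add_angle_add_angle_eq_pi C hAB.symm
  rw [angle_comm B C A, angle_comm C A B] at hsum
  have hA₁A := angle_add_angle_add_half_angle_eq_pi_of_bisector hAB hA₁ hbisA
  have hB₁B := angle_add_angle_add_half_angle_eq_pi_of_bisector hAB.symm hB₁ hbisB
  have hsin : sin (∠ B A₁ A) = sin (∠ A B₁ B) := by
    have h := sin_angle_mul_dist_eq_of_angle_bisectors hA₁ hbisA hB₁ hbisB hJA' hJB'
    rw [hJ] at h
    exact mul_right_cancel₀ (dist_ne_zero.2 hJB'.ne_right) h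
  rcases Real.eq_or_add_eq_pi_of_sin_eq_sin (by linarith) (by linarith) (by linarith)
    (by linarith) hsin with h | h
  · left
    refine dist_eq_of_angle_eq_angle_of_angle_ne_pi ?_ (by linarith)
    rw [angle_comm C A B, angle_comm C B A]
    linarith
  · right
    linarith
end

section
/- Let MNPQ be a square inscribed in triangle ABC with M, N on side AB, P on BC, Q on CA, and let O be the center of the square. If ∠ACB = 90°, then ∠ACO = ∠BCO (CO bisects angle ACB). -/
/-!
Put `C` at the origin and write `a = CA`, `b = CB`, so `⟪a, b⟫ = 0`. Since `MNPQ` is a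
parallelogram, `M - N = Q - P`, and as `M - N` is parallel to `b - a`, `Q = C + s • a` and
`P = C + s • b` for the same `s`. With `M = C + (1 - μ) • a + μ • b`, the side `NP` is `NM` turned by
a quarter turn, in the direction forced by the positions of the vertices on the sides. This gives
`(1 - μ) ‖a‖ = (μ + s) ‖b‖`: the center `O = C + ((1 - μ) / 2) • a + ((μ + s) / 2) • b` is
equidistant from the lines `CB` and `CA`.
-/

open EuclideanGeometry
open InnerProductGeometry (inner_eq_zero_iff_angle_eq_pi_div_two)
open scoped RealInnerProductSpace

theorem eq_quarter_turn_of_mul_add_mul_eq_zero {p q r w : ℝ} (horth : p * r + q * w = 0)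
    (hnorm : r ^ 2 + w ^ 2 = p ^ 2 + q ^ 2) : (r = q ∧ w = -p) ∨ (r = -q ∧ w = p) := by
  have hcross : (r * q - w * p) ^ 2 = (p ^ 2 + q ^ 2) ^ 2 := by
    linear_combination (p ^ 2 + q ^ 2) * hnorm - (p * r + q * w) * horth
  rcases sq_eq_sq_iff_eq_or_eq_neg.mp hcross with h | h
  · left
    have h0 : (r - q) * (r - q) + (w + p) * (w + p) = 0 := by linear_combination hnorm - 2 * h
    obtain ⟨h1, h2⟩ := mul_self_add_mul_self_eq_zero.mp h0
    constructor <;> linarith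
  · right
    have h0 : (r + q) * (r + q) + (w - p) * (w - p) = 0 := by linear_combination hnorm + 2 * h
    obtain ⟨h1, h2⟩ := mul_self_add_mul_self_eq_zero.mp h0
    constructor <;> linarith

section OrthogonalPair

variable {V : Type*} [NormedAddCommGroup V] [InnerProductSpace ℝ V] {a b : V}

theorem inner_smul_add_smul_of_inner_eq_zero (hab : ⟪a, b⟫ = 0) (α β γ δ : ℝ) :
    ⟪α • a + β • b, γ • a + δ • b⟫ = α * γ * ‖a‖ ^ 2 + β * δ * ‖b‖ ^ 2 := by
  have hba : ⟪b, a⟫ = 0 := by rwa [real_inner_comm]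
  simp only [inner_add_left, inner_add_right, real_inner_smul_left, real_inner_smul_right, hab, hba,
    real_inner_self_eq_norm_sq]
  ring

theorem norm_smul_add_smul_sq_of_inner_eq_zero (hab : ⟪a, b⟫ = 0) (α β : ℝ) :
    ‖α • a + β • b‖ ^ 2 = α ^ 2 * ‖a‖ ^ 2 + β ^ 2 * ‖b‖ ^ 2 := by
  rw [← real_inner_self_eq_norm_sq, inner_smul_add_smul_of_inner_eq_zero hab]
  ring

theorem smul_add_smul_inj_of_inner_eq_zero (hab : ⟪a, b⟫ = 0) (ha : a ≠ 0) (hb : b ≠ 0)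
    {α β γ δ : ℝ} (h : α • a + β • b = γ • a + δ • b) : α = γ ∧ β = δ := by
  have hα := congrArg (⟪·, (1 : ℝ) • a + (0 : ℝ) • b⟫) h
  have hβ := congrArg (⟪·, (0 : ℝ) • a + (1 : ℝ) • b⟫) h
  simp only [inner_smul_add_smul_of_inner_eq_zero hab] at hα hβ
  constructor
  · exact mul_right_cancel₀ (pow_ne_zero 2 (norm_ne_zero_iff.mpr ha)) (by linear_combination hα)
  · exact mul_right_cancel₀ (pow_ne_zero 2 (norm_ne_zero_iff.mpr hb)) (by linear_combination hβ)

theorem angle_smul_add_smul_eq_of_inner_eq_zero (hab : ⟪a, b⟫ = 0) {α β : ℝ}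
    (h : α * ‖a‖ = β * ‖b‖) :
    InnerProductGeometry.angle a (α • a + β • b) = InnerProductGeometry.angle b (α • a + β • b) := by
  have hcos (c x n : ℝ) : c * x ^ 2 / (x * n) = c * x / n := by
    rw [← div_div, sq, mul_div_assoc, mul_self_div_self]
  have ha := inner_smul_add_smul_of_inner_eq_zero hab 1 0 α β
  have hb := inner_smul_add_smul_of_inner_eq_zero hab 0 1 α β
  simp only [one_smul, zero_smul, add_zero, zero_add, one_mul, zero_mul] at ha hb
  rw [InnerProductGeometry.angle, InnerProductGeometry.angle, ha, hb, hcos, hcos, h]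

/-- The two vectors are the sides `NM`, `NP` of the square in the basis `a = CA`, `b = CB`;
`0 ≤ μ, s` excludes the mirror-image quarter turn. -/
theorem one_sub_mul_norm_eq_of_inner_eq_zero_of_norm_eq (hab : ⟪a, b⟫ = 0) (ha : a ≠ 0)
    (hb : b ≠ 0) {μ s : ℝ} (hμ : 0 ≤ μ) (hs : 0 ≤ s)
    (horth : ⟪s • a + (-s) • b, (μ + s - 1) • a + (-μ) • b⟫ = 0)
    (hlen : ‖s • a + (-s) • b‖ = ‖(μ + s - 1) • a + (-μ) • b‖) :
    (1 - μ) * ‖a‖ = (μ + s) * ‖b‖ := by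
  rw [inner_smul_add_smul_of_inner_eq_zero hab] at horth
  have hsq := congrArg (· ^ 2) hlen
  simp only [norm_smul_add_smul_sq_of_inner_eq_zero hab] at hsq
  have ha' : 0 < ‖a‖ := norm_pos_iff.mpr ha
  have hb' : 0 < ‖b‖ := norm_pos_iff.mpr hb
  rcases eq_quarter_turn_of_mul_add_mul_eq_zero (p := s * ‖a‖) (q := -s * ‖b‖)
    (r := (μ + s - 1) * ‖a‖) (w := -μ * ‖b‖) (by linear_combination horth)
    (by linear_combination -hsq) with ⟨h1, h2⟩ | ⟨h1, h2⟩
  · linarith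
  · nlinarith [mul_nonneg hs ha'.le, mul_nonneg hμ hb'.le, mul_pos ha' hb']

end OrthogonalPair

theorem stmt8_general (A B C M N P Q O : EuclideanSpace ℝ (Fin 2))
    (hABC : AffineIndependent ℝ ![A, B, C])
    (hM : M ∈ segment ℝ A B) (hN : N ∈ segment ℝ A B)
    (hP : P ∈ segment ℝ B C) (hQ : Q ∈ segment ℝ C A)
    (hs1 : dist M N = dist N P)
    (ha2 : ∠ M N P = Real.pi / 2)
    (hO1 : O = midpoint ℝ M P) (hO2 : O = midpoint ℝ N Q)
    (hC : ∠ A C B = Real.pi / 2) :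
    ∠ A C O = ∠ B C O := by
  obtain ⟨a, rfl⟩ : ∃ a, A = a + C := ⟨A - C, by abel⟩
  obtain ⟨b, rfl⟩ : ∃ b, B = b + C := ⟨B - C, by abel⟩
  have hab : ⟪a, b⟫ = 0 := by
    rw [inner_eq_zero_iff_angle_eq_pi_div_two]
    simpa [EuclideanGeometry.angle] using hC
  have ha : a ≠ 0 := by simpa using hABC.injective.ne (show (0 : Fin 3) ≠ 2 by decide)
  have hb : b ≠ 0 := by simpa using hABC.injective.ne (show (1 : Fin 3) ≠ 2 by decide)
  rw [segment_eq_image] at hM hN hP hQ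
  obtain ⟨μ, ⟨hμ, -⟩, hM⟩ := hM
  obtain ⟨ν, -, hN⟩ := hN
  obtain ⟨t, -, hP⟩ := hP
  obtain ⟨s, ⟨hs, -⟩, hQ⟩ := hQ
  have hpar : M -ᵥ N = Q -ᵥ P := (midpoint_eq_midpoint_iff_vsub_eq_vsub ℝ).mp (hO1.symm.trans hO2)
  obtain ⟨hν, ht⟩ : ν - μ = s ∧ μ - ν = t - 1 := by
    refine smul_add_smul_inj_of_inner_eq_zero hab ha hb ?_
    rw [vsub_eq_sub, vsub_eq_sub, ← hM, ← hN, ← hP, ← hQ] at hpar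
    linear_combination (norm := module) hpar
  obtain rfl : ν = μ + s := by linarith
  obtain rfl : t = 1 - s := by linarith
  have hMN : M - N = s • a + (-s) • b := by rw [← hM, ← hN]; module
  have hPN : P - N = (μ + s - 1) • a + (-μ) • b := by rw [← hP, ← hN]; module
  have hCO : O - C = ((1 - μ) / 2) • a + ((μ + s) / 2) • b := by
    rw [hO1, midpoint_eq_smul_add, invOf_eq_inv, ← hM, ← hP]; module
  have horth : ⟪M - N, P - N⟫ = 0 := (inner_eq_zero_iff_angle_eq_pi_div_two _ _).mpr ha2
  have hlen : ‖M - N‖ = ‖P - N‖ := by rw [← dist_eq_norm, ← dist_eq_norm, hs1, dist_comm]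
  rw [hMN, hPN] at horth hlen
  have hcenter := one_sub_mul_norm_eq_of_inner_eq_zero_of_norm_eq hab ha hb hμ hs horth hlen
  simp only [EuclideanGeometry.angle, vsub_eq_sub, add_sub_cancel_right, hCO]
  exact angle_smul_add_smul_eq_of_inner_eq_zero hab (by linarith)

theorem stmt8 (A B C M N P Q O : EuclideanSpace ℝ (Fin 2))
    (hABC : AffineIndependent ℝ ![A, B, C])
    (hM : M ∈ segment ℝ A B) (hN : N ∈ segment ℝ A B)
    (hP : P ∈ segment ℝ B C) (hQ : Q ∈ segment ℝ C A)
    (hs1 : dist M N = dist N P) (hs2 : dist N P = dist P Q)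
    (hs3 : dist P Q = dist Q M)
    (ha1 : ∠ Q M N = Real.pi / 2) (ha2 : ∠ M N P = Real.pi / 2)
    (ha3 : ∠ N P Q = Real.pi / 2)
    (hO1 : O = midpoint ℝ M P) (hO2 : O = midpoint ℝ N Q)
    (hC : ∠ A C B = Real.pi / 2) :
    ∠ A C O = ∠ B C O :=
  stmt8_general A B C M N P Q O hABC hM hN hP hQ hs1 ha2 hO1 hO2 hC
end

section
/- Let MNPQ be a square inscribed in triangle ABC with M, N on side AB, P on BC, Q on CA, and let O be its center. If ∠ACO = ∠BCO, then CA = CB or ∠ACB = 90°. -/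
/-!
Put `C` at the origin, with `u = CA` and `v = CB`. Since `QP` is a translate of `MN ⊂ AB`, the
points `Q`, `P` divide `CA`, `CB` in the same ratio `l`, and `M = Q + e` with `e ⟂ AB` and
`‖e‖ = l ‖AB‖`, so that `2 CO = e + l (u + v)`. With `a = CA`, `b = CB`, `x = ⟪u, v⟫`, the equality
of the angles `ACO` and `BCO` becomes `(a - b) (⟪u, e⟫ - l (a b - x)) = 0`. As `e` is `1 - l` times
the altitude `h` from `C` and `l ‖AB‖ = (1 - l) ‖h‖`, the second factor says
`a b - x = ‖AB‖ ‖h‖ = √(a² b² - x²)`, i.e. `cos C + sin C = 1`, which forces `x = 0`.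
-/

open EuclideanGeometry
open scoped RealInnerProductSpace

theorem Sbtw.exists_vsub_eq_smul {V P : Type*} [AddCommGroup V] [Module ℝ V] [AddTorsor V P]
    {x y z : P} (h : Sbtw ℝ x y z) : ∃ t ∈ Set.Ioo (0 : ℝ) 1, y -ᵥ x = t • (z -ᵥ x) := by
  obtain ⟨t, ht, rfl⟩ := h.mem_image_Ioo
  exact ⟨t, ht, AffineMap.lineMap_vsub_left x z t⟩

theorem AffineIndependent.linearIndependent_vsub_vsub {V P : Type*} [AddCommGroup V] [Module ℝ V]
    [AddTorsor V P] {A B C : P} (h : AffineIndependent ℝ ![A, B, C]) :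
    LinearIndependent ℝ ![A -ᵥ C, B -ᵥ C] := by
  rw [affineIndependent_iff_linearIndependent_vsub ℝ _ 2] at h
  convert h.comp _ (finSuccAboveEquiv (2 : Fin 3)).injective using 1
  · ext i
    fin_cases i <;> rfl
  · rfl

theorem LinearIndependent.eq_of_sub_eq_sub {V : Type*} [AddCommGroup V] [Module ℝ V]
    {A B C M N P Q : V} {l μ s t : ℝ} (h : LinearIndependent ℝ ![A - C, B - C])
    (hQ : Q - C = l • (A - C)) (hP : P - C = μ • (B - C)) (hM : M - A = t • (B - A))
    (hN : N - A = s • (B - A)) (hMN : M - N = Q - P) : μ = l ∧ N - M = l • (B - A) := by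
  obtain ⟨hl, hμ⟩ := LinearIndependent.pair_iff.mp h (s - t - l) (μ - (s - t))
    (by linear_combination (norm := module) hN - hM + hMN + hQ - hP)
  refine ⟨by linarith, ?_⟩
  linear_combination (norm := module) hN - hM + (sub_eq_zero.mp hl) • (B - A)

theorem eq_or_eq_zero_of_gram_relations {a b x l E c : ℝ} (hl : l ≠ 1) (hx : x ^ 2 < a ^ 2 * b ^ 2)
    (hgram : E * c = (1 - l) * (a ^ 2 * b ^ 2 - x ^ 2)) (hside : l ^ 2 * c = (1 - l) * E)
    (hbis : (a - b) * (E - l * (a * b - x)) = 0) : a = b ∨ x = 0 := by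
  set G := a ^ 2 * b ^ 2 - x ^ 2
  refine (mul_eq_zero.mp hbis).imp sub_eq_zero.mp fun hE => ?_
  have hlc : (l * c) ^ 2 = (1 - l) ^ 2 * G := by linear_combination (1 - l) * hgram + c * hside
  have hlcx : l * c * (a * b - x) = (1 - l) * G := by
    rw [← hgram, sub_eq_zero.mp hE]
    ring
  have hGx : (1 - l) ^ 2 * G * ((a * b - x) ^ 2 - G) = 0 := by
    linear_combination (l * c * (a * b - x) + (1 - l) * G) * hlcx - (a * b - x) ^ 2 * hlc
  have hG : G ≠ 0 := sub_ne_zero.mpr hx.ne'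
  have hxab : x ≠ a * b := by
    rintro rfl
    exact lt_irrefl _ (mul_pow a b 2 ▸ hx)
  have : 2 * x * (x - a * b) = 0 := by
    linear_combination (mul_eq_zero.mp hGx).resolve_left (by simp [sub_eq_zero, hl.symm, hG])
  simpa [sub_eq_zero, hxab] using this

variable {V : Type*} [NormedAddCommGroup V] [InnerProductSpace ℝ V]

theorem LinearIndependent.real_inner_sq_lt {u v : V} (h : LinearIndependent ℝ ![u, v]) :
    ⟪u, v⟫ ^ 2 < ‖u‖ ^ 2 * ‖v‖ ^ 2 := by
  have hu : u ≠ 0 := h.ne_zero 0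
  have hv : v ≠ 0 := h.ne_zero 1
  have hne : |⟪u, v⟫| ≠ ‖u‖ * ‖v‖ := by
    intro heq
    obtain ⟨r, -, rfl⟩ := (norm_inner_eq_norm_iff (𝕜 := ℝ) hu hv).mp (by rwa [Real.norm_eq_abs])
    have := LinearIndependent.pair_iff.mp h r (-1) (by module)
    norm_num at this
  have hlt := lt_of_le_of_ne (abs_real_inner_le_norm u v) hne
  rw [← mul_pow, ← sq_abs]
  exact pow_lt_pow_left₀ hlt (abs_nonneg _) two_ne_zero

theorem InnerProductGeometry.real_inner_mul_norm_eq_of_angle_eq {u v w : V}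
    (h : InnerProductGeometry.angle u w = InnerProductGeometry.angle v w) :
    ⟪u, w⟫ * ‖v‖ = ⟪v, w⟫ * ‖u‖ := by
  rcases eq_or_ne u 0 with rfl | hu
  · simp
  rcases eq_or_ne v 0 with rfl | hv
  · simp
  rcases eq_or_ne w 0 with rfl | hw
  · simp
  have hcos := congrArg Real.cos h
  rw [InnerProductGeometry.cos_angle, InnerProductGeometry.cos_angle,
    div_eq_div_iff (by positivity) (by positivity)] at hcos
  have hw' : ‖w‖ ≠ 0 := norm_ne_zero_iff.mpr hw
  exact mul_right_cancel₀ hw' (by linear_combination hcos)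

-- With `C` at the origin: `A = u`, `B = v`, `Q = l • u`, `P = l • v`, `M = Q + e`, `O = w`.
theorem norm_eq_or_inner_eq_zero_of_inscribed_square {u v e w : V} {l t : ℝ}
    (huv : LinearIndependent ℝ ![u, v]) (hl : l ≠ 1)
    (he : e = (1 - l) • u + t • (v - u)) (he_perp : ⟪e, v - u⟫ = 0)
    (he_norm : ‖e‖ = ‖l • (v - u)‖) (hw : (2 : ℝ) • w = e + l • (u + v))
    (hbis : InnerProductGeometry.angle u w = InnerProductGeometry.angle v w) :
    ‖u‖ = ‖v‖ ∨ ⟪u, v⟫ = 0 := by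
  have hbis' : ⟪u, (2 : ℝ) • w⟫ * ‖v‖ = ⟪v, (2 : ℝ) • w⟫ * ‖u‖ := by
    rw [inner_smul_right, inner_smul_right]
    linear_combination 2 * InnerProductGeometry.real_inner_mul_norm_eq_of_angle_eq hbis
  rw [hw] at hbis'
  have hsym : ⟪v, e⟫ = ⟪u, e⟫ := by
    rw [inner_sub_right, real_inner_comm v e, real_inner_comm u e, sub_eq_zero] at he_perp
    exact he_perp
  have hee : ‖e‖ ^ 2 = (1 - l) * ⟪u, e⟫ := by
    rw [← real_inner_self_eq_norm_sq]
    nth_rw 1 [he]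
    rw [inner_add_left, inner_smul_left, inner_smul_left, inner_sub_left, hsym]
    simp
  have hvu : ‖v - u‖ ^ 2 = ‖u‖ ^ 2 + ‖v‖ ^ 2 - 2 * ⟪u, v⟫ := by
    rw [norm_sub_sq_real, real_inner_comm]; ring
  have hue : ⟪u, e⟫ = (1 - l) * ‖u‖ ^ 2 + t * (⟪u, v⟫ - ‖u‖ ^ 2) := by
    rw [he, inner_add_right, inner_smul_right, inner_smul_right, inner_sub_right,
      real_inner_self_eq_norm_sq]
  have hve : ⟪v, e⟫ = (1 - l) * ⟪u, v⟫ + t * (‖v‖ ^ 2 - ⟪u, v⟫) := by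
    rw [he, inner_add_right, inner_smul_right, inner_smul_right, inner_sub_right,
      real_inner_self_eq_norm_sq, real_inner_comm]
  refine eq_or_eq_zero_of_gram_relations (c := ‖v - u‖ ^ 2) (E := ⟪u, e⟫) hl
    (by linarith [huv.real_inner_sq_lt]) ?_ ?_ ?_
  · rw [hvu]
    linear_combination (‖u‖ ^ 2 + ‖v‖ ^ 2 - 2 * ⟪u, v⟫) * hue -
      (⟪u, v⟫ - ‖u‖ ^ 2) * (hue.symm.trans (hsym.symm.trans hve))
  · rw [← hee, he_norm, norm_smul, mul_pow, Real.norm_eq_abs, sq_abs]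
  · rw [inner_add_right, inner_add_right, inner_smul_right, inner_smul_right, inner_add_right,
      inner_add_right, real_inner_self_eq_norm_sq, real_inner_self_eq_norm_sq, real_inner_comm u v,
      hsym] at hbis'
    linear_combination -hbis'

theorem stmt10_general (A B C M N P Q O : EuclideanSpace ℝ (Fin 2))
    (hABC : AffineIndependent ℝ ![A, B, C])
    (hM : Sbtw ℝ A M B) (hN : Sbtw ℝ A N B)
    (hP : Sbtw ℝ B P C) (hQ : Sbtw ℝ C Q A)
    (hs1 : dist M N = dist N P) (hs2 : dist N P = dist P Q)
    (hs3 : dist P Q = dist Q M)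
    (ha1 : ∠ Q M N = Real.pi / 2)
    (hO1 : O = midpoint ℝ M P) (hO2 : O = midpoint ℝ N Q)
    (hbis : ∠ A C O = ∠ B C O) :
    dist C A = dist C B ∨ ∠ A C B = Real.pi / 2 := by
  have hind : LinearIndependent ℝ ![A - C, B - C] := hABC.linearIndependent_vsub_vsub
  obtain ⟨l, ⟨hl0, hl1⟩, hQC : Q - C = l • (A - C)⟩ := hQ.exists_vsub_eq_smul
  obtain ⟨μ, -, hPC : P - C = μ • (B - C)⟩ := hP.symm.exists_vsub_eq_smul
  obtain ⟨t, -, hMA : M - A = t • (B - A)⟩ := hM.exists_vsub_eq_smul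
  obtain ⟨s, -, hNA : N - A = s • (B - A)⟩ := hN.exists_vsub_eq_smul
  obtain ⟨hμ, hNM⟩ := hind.eq_of_sub_eq_sub hQC hPC hMA hNA
    ((midpoint_eq_midpoint_iff_vsub_eq_vsub ℝ).mp (hO1.symm.trans hO2))
  subst μ
  have hOO : O + O = M + P := hO1 ▸ midpoint_add_self ℝ M P
  have he_perp : ⟪M - Q, (B - C) - (A - C)⟫ = 0 := by
    have h := (InnerProductGeometry.inner_eq_zero_iff_angle_eq_pi_div_two _ _).mpr ha1
    rw [vsub_eq_sub, vsub_eq_sub, ← neg_sub, hNM, inner_neg_left, inner_smul_right] at h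
    simpa [hl0.ne'] using h
  have he_norm : ‖M - Q‖ = ‖l • ((B - C) - (A - C))‖ := by
    rw [sub_sub_sub_cancel_right, ← hNM, ← dist_eq_norm, ← dist_eq_norm, dist_comm M Q,
      dist_comm N M, ← hs3, ← hs2, ← hs1]
  rcases norm_eq_or_inner_eq_zero_of_inscribed_square (t := t) (w := O - C) hind hl1.ne
      (by linear_combination (norm := module) hMA - hQC) he_perp he_norm
      (by linear_combination (norm := module) hOO + hPC + hQC) hbis with h | h
  · left
    rwa [dist_comm C A, dist_comm C B, dist_eq_norm, dist_eq_norm]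
  · exact Or.inr ((InnerProductGeometry.inner_eq_zero_iff_angle_eq_pi_div_two _ _).mp h)

theorem stmt10 (A B C M N P Q O : EuclideanSpace ℝ (Fin 2))
    (hABC : AffineIndependent ℝ ![A, B, C])
    (hM : Sbtw ℝ A M B) (hN : Sbtw ℝ A N B)
    (hP : Sbtw ℝ B P C) (hQ : Sbtw ℝ C Q A)
    (hs1 : dist M N = dist N P) (hs2 : dist N P = dist P Q)
    (hs3 : dist P Q = dist Q M)
    (ha1 : ∠ Q M N = Real.pi / 2) (ha2 : ∠ M N P = Real.pi / 2)
    (ha3 : ∠ N P Q = Real.pi / 2)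
    (hO1 : O = midpoint ℝ M P) (hO2 : O = midpoint ℝ N Q)
    (hOC : O ≠ C)
    (hbis : ∠ A C O = ∠ B C O) :
    dist C A = dist C B ∨ ∠ A C B = Real.pi / 2 :=
  stmt10_general A B C M N P Q O hABC hM hN hP hQ hs1 hs2 hs3 ha1 hO1 hO2 hbis
end

section
/- In triangle ABC, let AA₁ and BB₁ be the internal bisectors of angles CAB and CBA (A₁ on BC, B₁ on AC). If ∠BAC = 120°, then ∠BB₁A₁ = 30°. -/
/-!
By the angle bisector theorem, with `a = BC`, `b = CA`, `c = AB`, the foot `A₁` lies at parameter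
`c / (c + b)` on `BC` and `B₁` at parameter `c / (c + a)` on `AC`. Put `u = B - A`, `v = C - A`:
the angle `2π/3` at `A` gives `⟪u, v⟫ = -bc/2`, hence `a² = b² + c² + bc`. Up to positive factors,
`B - B₁` and `A₁ - B₁` are `(c + a) u - c v` and `b (c + a) u + c (a - b) v`; their inner product is
`3abc²(c + a)/2` and, modulo `a² = b² + c² + bc`, the product of their squared norms is
`3 (abc²(c + a))²`. So the cosine of the angle is `√3/2`.
-/

open Real EuclideanGeometry RealInnerProductSpace InnerProductGeometry AffineMap

namespace InnerProductGeometry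

variable {V : Type*} [NormedAddCommGroup V] [InnerProductSpace ℝ V]

theorem angle_eq_pi_div_six_of_inner_pos {x y : V} (hpos : 0 < ⟪x, y⟫)
    (hsq : 4 * ⟪x, y⟫ ^ 2 = 3 * (‖x‖ ^ 2 * ‖y‖ ^ 2)) : angle x y = π / 6 := by
  have hx : x ≠ 0 := by rintro rfl; simp at hpos
  have hy : y ≠ 0 := by rintro rfl; simp at hpos
  have hcos : ⟪x, y⟫ / (‖x‖ * ‖y‖) = cos (π / 6) := by
    rw [cos_pi_div_six]
    refine (pow_left_inj₀ (by positivity) (by positivity) two_ne_zero).mp ?_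
    rw [div_pow, div_pow, sq_sqrt zero_le_three, mul_pow]
    field_simp
    linarith
  rw [angle, hcos, arccos_cos (by positivity) (by linarith [pi_pos])]

theorem angle_smul_sub_smul_smul_add_smul_eq_pi_div_six {u v : V} {a b c : ℝ} (hc : ‖u‖ = c)
    (hb : ‖v‖ = b) (ha : ‖u - v‖ = a) (huv : angle u v = 2 * π / 3) :
    angle ((c + a) • u - c • v) ((b * (c + a)) • u + (c * (a - b)) • v) = π / 6 := by
  have hu : u ≠ 0 := by rintro rfl; rw [angle_zero_left] at huv; linarith [pi_pos]
  have hv : v ≠ 0 := by rintro rfl; rw [angle_zero_right] at huv; linarith [pi_pos]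
  have c_pos : 0 < c := hc ▸ norm_pos_iff.2 hu
  have b_pos : 0 < b := hb ▸ norm_pos_iff.2 hv
  have hinner : ⟪u, v⟫ = -(c * b) / 2 := by
    rw [← cos_angle_mul_norm_mul_norm, huv, hc, hb,
      show 2 * π / 3 = π - π / 3 by ring, cos_pi_sub, cos_pi_div_three]
    ring
  have hinner' : ⟪v, u⟫ = -(c * b) / 2 := by rw [real_inner_comm, hinner]
  have law_cos : a ^ 2 = b ^ 2 + c ^ 2 + b * c := by
    rw [← ha, norm_sub_sq_real, hinner, hc, hb]; ring
  have a_pos : 0 < a := by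
    have := ha ▸ norm_nonneg (u - v)
    nlinarith
  have hu2 : ⟪u, u⟫ = c ^ 2 := by rw [real_inner_self_eq_norm_sq, hc]
  have hv2 : ⟪v, v⟫ = b ^ 2 := by rw [real_inner_self_eq_norm_sq, hb]
  have hPQ : ⟪(c + a) • u - c • v, (b * (c + a)) • u + (c * (a - b)) • v⟫ =
      3 * a * b * c ^ 2 * (c + a) / 2 := by
    simp only [inner_add_right, inner_sub_left, real_inner_smul_left, real_inner_smul_right,
      hu2, hv2, hinner, hinner']
    linear_combination (-b * c ^ 2) * law_cos
  have hP : ‖(c + a) • u - c • v‖ ^ 2 = a * c ^ 2 * (2 * a + b + 2 * c) := by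
    simp only [← real_inner_self_eq_norm_sq, inner_sub_left, inner_sub_right,
      real_inner_smul_left, real_inner_smul_right, hu2, hv2, hinner, hinner']
    linear_combination (-c ^ 2) * law_cos
  have hQ : ‖(b * (c + a)) • u + (c * (a - b)) • v‖ ^ 2 =
      a * b ^ 2 * c ^ 2 * (2 * a + c - b) := by
    simp only [← real_inner_self_eq_norm_sq, inner_add_left, inner_add_right,
      real_inner_smul_left, real_inner_smul_right, hu2, hv2, hinner, hinner']
    linear_combination (-b ^ 2 * c ^ 2) * law_cos
  refine angle_eq_pi_div_six_of_inner_pos (by rw [hPQ]; positivity) ?_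
  rw [hPQ, hP, hQ]
  linear_combination (-3 * a ^ 2 * b ^ 2 * c ^ 4) * law_cos

end InnerProductGeometry

namespace EuclideanGeometry

variable {V P : Type*} [NormedAddCommGroup V] [InnerProductSpace ℝ V] [MetricSpace P]
  [NormedAddTorsor V P]

theorem eq_dist_div_of_angle_lineMap_eq {A B C : P} (hB : B ≠ A) (hC : C ≠ A)
    (hBAC : ∠ B A C ≠ 0) {t : ℝ} (ht : ∠ B A (lineMap B C t) = ∠ C A (lineMap B C t)) :
    t = dist A B / (dist A B + dist A C) := by
  rw [dist_eq_norm_vsub' V, dist_eq_norm_vsub' V]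
  unfold EuclideanGeometry.angle at ht hBAC
  rw [lineMap_vsub, lineMap_apply_module] at ht
  set u := B -ᵥ A
  set v := C -ᵥ A
  set w := (1 - t) • u + t • v
  have hu : 0 < ‖u‖ := norm_pos_iff.2 (vsub_ne_zero.2 hB)
  have hv : 0 < ‖v‖ := norm_pos_iff.2 (vsub_ne_zero.2 hC)
  have hbis : ‖v‖ * ⟪u, w⟫ = ‖u‖ * ⟪v, w⟫ := by
    rw [← cos_angle_mul_norm_mul_norm u w, ← cos_angle_mul_norm_mul_norm v w, ht]
    ring
  have hlt : ⟪u, v⟫ ≠ ‖u‖ * ‖v‖ := by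
    rwa [Ne, inner_eq_mul_norm_iff_angle_eq_zero (vsub_ne_zero.2 hB) (vsub_ne_zero.2 hC)]
  have hfactor : (‖u‖ * ‖v‖ - ⟪u, v⟫) * (‖u‖ * (1 - t) - ‖v‖ * t) = 0 := by
    simp only [w, inner_add_right, real_inner_smul_right, real_inner_self_eq_norm_sq,
      real_inner_comm u v] at hbis
    linear_combination hbis
  have := (mul_eq_zero.1 hfactor).resolve_left (sub_ne_zero.2 hlt.symm)
  field_simp
  linarith

theorem angle_lineMap_lineMap_eq_pi_div_six {A B C : P} (h : ∠ B A C = 2 * π / 3) :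
    ∠ B (lineMap A C (dist B A / (dist B A + dist B C)))
      (lineMap B C (dist A B / (dist A B + dist A C))) = π / 6 := by
  have hB : B ≠ A := by rintro rfl; rw [angle_self_left] at h; linarith [pi_pos]
  have hC : C ≠ A := by rintro rfl; rw [angle_self_right] at h; linarith [pi_pos]
  set u := B -ᵥ A
  set v := C -ᵥ A
  set a := dist B C
  set b := dist A C
  set c := dist A B
  have hc : ‖u‖ = c := (dist_eq_norm_vsub' V A B).symm
  have hb : ‖v‖ = b := (dist_eq_norm_vsub' V A C).symm
  have ha : ‖u - v‖ = a := by rw [vsub_sub_vsub_cancel_right, ← dist_eq_norm_vsub]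
  have c_pos : 0 < c := dist_pos.2 hB.symm
  have b_pos : 0 < b := dist_pos.2 hC.symm
  have a_nonneg : 0 ≤ a := dist_nonneg
  have hBB₁ : B -ᵥ lineMap A C (c / (c + a)) = (c + a)⁻¹ • ((c + a) • u - c • v) := by
    rw [vsub_lineMap, lineMap_apply_module, ← vsub_sub_vsub_cancel_right B C A]
    match_scalars
    · field_simp
      ring
    · field_simp
  have hA₁B₁ : lineMap B C (c / (c + b)) -ᵥ lineMap A C (c / (c + a)) =
      ((c + b) * (c + a))⁻¹ • ((b * (c + a)) • u + (c * (a - b)) • v) := by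
    rw [← vsub_sub_vsub_cancel_right _ _ A, lineMap_vsub, lineMap_vsub_left, lineMap_apply_module]
    match_scalars <;> field_simp <;> ring
  rw [dist_comm B A]
  unfold EuclideanGeometry.angle at h ⊢
  rw [hBB₁, hA₁B₁, InnerProductGeometry.angle_smul_left_of_pos _ _ (by positivity),
    InnerProductGeometry.angle_smul_right_of_pos _ _ (by positivity)]
  exact angle_smul_sub_smul_smul_add_smul_eq_pi_div_six hc hb ha h

end EuclideanGeometry

theorem stmt12 (A B C A₁ B₁ : EuclideanSpace ℝ (Fin 2))
    (hABC : AffineIndependent ℝ ![A, B, C])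
    (hA₁ : Sbtw ℝ B A₁ C) (hbisA : ∠ B A A₁ = ∠ C A A₁)
    (hB₁ : Sbtw ℝ A B₁ C) (hbisB : ∠ A B B₁ = ∠ C B B₁)
    (hA : ∠ B A C = 2 * Real.pi / 3) :
    ∠ B B₁ A₁ = Real.pi / 6 := by
  have hABC' : ¬Collinear ℝ {A, B, C} := affineIndependent_iff_not_collinear_set.mp hABC
  have hBAC' : ¬Collinear ℝ {B, A, C} := by rwa [Set.insert_comm]
  obtain ⟨t, -, rfl⟩ := hA₁.wbtw
  obtain ⟨s, -, rfl⟩ := hB₁.wbtw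
  rw [eq_dist_div_of_angle_lineMap_eq (ne₁₂_of_not_collinear hABC').symm
      (ne₁₃_of_not_collinear hABC').symm (angle_ne_zero_of_not_collinear hBAC') hbisA,
    eq_dist_div_of_angle_lineMap_eq (ne₁₂_of_not_collinear hBAC').symm
      (ne₂₃_of_not_collinear hABC').symm (angle_ne_zero_of_not_collinear hABC') hbisB]
  exact angle_lineMap_lineMap_eq_pi_div_six hA
end

section
/- In triangle ABC, let AA₁ and BB₁ be the internal bisectors of angles CAB and CBA (A₁ on BC, B₁ on AC). If ∠BB₁A₁ = 30°, then ∠ACB = 60° or ∠BAC = 120°. -/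
/-!
Write `α, β, γ` for the angles of `ABC`. The bisector theorem and the law of sines in `ABC` give
`A₁C : B₁C = (sin α + sin γ) : (sin β + sin γ)`, and the law of sines in `A₁B₁C` gives
`A₁C : B₁C = sin ∠A₁B₁C : sin ∠B₁A₁C`. An angle chase yields `∠A₁B₁C = α + β/2 - π/6` and
`∠B₁A₁C = β/2 + π/6`, and the resulting trigonometric equation factors as
`sin (α + β) * (sin (α + β/2 - π/6) - cos (β/2)) = 0`. Hence `α + β/2 - π/6 = π/2 ∓ β/2`,
that is `γ = π/3` or `α = 2π/3`.
-/

open EuclideanGeometry Real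

lemma sin_mul_add_sub_sin_mul_add (α β : ℝ) :
    sin (α + β / 2 - π / 6) * (sin β + sin (α + β))
      - sin (β / 2 + π / 6) * (sin α + sin (α + β))
      = sin (α + β) * (sin (α + β / 2 - π / 6) - cos (β / 2)) := by
  -- in the variables `u, p` every argument is an integer combination of `u`, `p` and `π / 6`,
  -- so after expansion the identity holds without `sin² + cos² = 1`
  obtain ⟨p, rfl⟩ : ∃ p, β = 2 * p + π / 3 := ⟨(β - π / 3) / 2, by ring⟩
  obtain ⟨u, rfl⟩ : ∃ u, α = u - p := ⟨α + p, by ring⟩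
  rw [show u - p + (2 * p + π / 3) / 2 - π / 6 = u by ring,
    show (2 * p + π / 3) / 2 + π / 6 = p + π / 3 by ring,
    show (2 * p + π / 3) / 2 = p + π / 6 by ring,
    show u - p + (2 * p + π / 3) = u + (p + π / 3) by ring, two_mul]
  simp only [sin_add, cos_add, sin_sub, sin_pi_div_six, cos_pi_div_six, sin_pi_div_three,
    cos_pi_div_three]
  ring

lemma eq_or_eq_neg_of_cos_eq_cos {x θ : ℝ} (hx : |x| ≤ π) (hθ : 0 ≤ θ) (hθ' : θ ≤ π)
    (h : cos x = cos θ) : x = θ ∨ x = -θ :=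
  (abs_eq hθ).mp (injOn_cos ⟨abs_nonneg x, hx⟩ ⟨hθ, hθ'⟩ (by rwa [cos_abs]))

lemma add_eq_two_pi_div_three_or_eq_of_sin_mul_eq {α β : ℝ} (hα : 0 < α) (hβ : 0 < β)
    (hαβ : α + β < π)
    (h : sin (α + β / 2 - π / 6) * (sin β + sin (α + β))
      = sin (β / 2 + π / 6) * (sin α + sin (α + β))) :
    α + β = 2 * π / 3 ∨ α = 2 * π / 3 := by
  have hsin : sin (α + β) ≠ 0 := (sin_pos_of_pos_of_lt_pi (by linarith) hαβ).ne'
  have hcos : cos (π / 2 - (α + β / 2 - π / 6)) = cos (β / 2) := by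
    rw [cos_pi_div_two_sub]
    have := sin_mul_add_sub_sin_mul_add α β
    rw [h, sub_self, eq_comm, mul_eq_zero] at this
    exact sub_eq_zero.mp (this.resolve_left hsin)
  rcases eq_or_eq_neg_of_cos_eq_cos (abs_le.mpr ⟨by linarith, by linarith⟩) (by linarith)
    (by linarith) hcos with h' | h'
  · left; linarith
  · right; linarith

section

variable {V P : Type*} [NormedAddCommGroup V] [InnerProductSpace ℝ V] [MetricSpace P]
  [NormedAddTorsor V P]

theorem dist_mul_dist_eq_of_angle_eq_of_sbtw {A B C D : P}
    (hnc : ¬Collinear ℝ ({B, A, C} : Set P)) (hD : Sbtw ℝ B D C) (hbis : ∠ B A D = ∠ C A D) :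
    dist B D * dist A C = dist D C * dist A B := by
  have hhalf : 0 < sin (∠ B A D) := by
    have hsplit : ∠ B A D + ∠ D A C = ∠ B A C := angle_add_angle_eq_of_sbtw hD
    rw [angle_comm D A C, ← hbis] at hsplit
    exact sin_pos_of_pos_of_lt_pi (by linarith [angle_pos_of_not_collinear hnc])
      (by linarith [angle_le_pi B A C, pi_pos])
  have hsupp : sin (∠ A D B) = sin (∠ A D C) := by
    rw [← sin_pi_sub, ← angle_add_angle_eq_pi_of_angle_eq_pi A hD.angle₁₂₃_eq_pi,
      add_sub_cancel_left]
  have hB := law_sin A D B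
  have hC := law_sin A D C
  rw [← hbis] at hC
  have hAB : 0 < dist B A := dist_pos.mpr (ne₁₂_of_not_collinear hnc)
  have hne : sin (∠ A D B) ≠ 0 := by
    intro h0
    rw [h0, zero_mul] at hB
    exact (mul_pos hhalf hAB).ne' hB.symm
  refine mul_left_cancel₀ hne ?_
  rw [dist_comm B D, dist_comm A C, dist_comm A B]
  linear_combination dist C A * hB - dist B A * hC - dist B A * dist D C * hsupp

theorem dist_mul_sin_add_sin_eq_of_angle_eq_of_sbtw {A B C D : P}
    (hnc : ¬Collinear ℝ ({B, A, C} : Set P)) (hD : Sbtw ℝ B D C) (hbis : ∠ B A D = ∠ C A D) :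
    dist D C * (sin (∠ A B C) + sin (∠ A C B)) = dist B C * sin (∠ A B C) := by
  have hbisect := dist_mul_dist_eq_of_angle_eq_of_sbtw hnc hD hbis
  have hlaw := law_sin C B A
  rw [angle_comm C B A, dist_comm B A] at hlaw
  refine mul_left_cancel₀ (dist_ne_zero.mpr (ne₂₃_of_not_collinear hnc)) ?_
  rw [← hD.wbtw.dist_add_dist]
  linear_combination -dist D C * hlaw - sin (∠ A B C) * hbisect

theorem sin_mul_sin_add_sin_eq_of_angle_bisectors {A B C A₁ B₁ : P}
    (hABC : ¬Collinear ℝ ({A, B, C} : Set P))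
    (hA₁ : Sbtw ℝ B A₁ C) (hbisA : ∠ B A A₁ = ∠ C A A₁)
    (hB₁ : Sbtw ℝ A B₁ C) (hbisB : ∠ A B B₁ = ∠ C B B₁) :
    sin (∠ A₁ B₁ C) * (sin (∠ A B C) + sin (∠ A C B))
      = sin (∠ B₁ A₁ C) * (sin (∠ B A C) + sin (∠ A C B)) := by
  have hfootA := dist_mul_sin_add_sin_eq_of_angle_eq_of_sbtw (by rwa [Set.insert_comm]) hA₁ hbisA
  have hfootB := dist_mul_sin_add_sin_eq_of_angle_eq_of_sbtw hABC hB₁ hbisB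
  have hlaw := law_sin A₁ B₁ C
  have hlawABC := law_sin B A C
  rw [angle_comm B C A] at hfootB
  rw [angle_comm C B A, dist_comm C B] at hlawABC
  rw [angle_comm C A₁ B₁, dist_comm C A₁] at hlaw
  refine mul_left_cancel₀ (dist_ne_zero.mpr hA₁.ne_right) ?_
  linear_combination sin (∠ A₁ B₁ C) * (hfootA - hfootB - hlawABC)
    + (sin (∠ B A C) + sin (∠ A C B)) * hlaw

end

theorem stmt13 (A B C A₁ B₁ : EuclideanSpace ℝ (Fin 2))
    (hABC : AffineIndependent ℝ ![A, B, C])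
    (hA₁ : Sbtw ℝ B A₁ C) (hbisA : ∠ B A A₁ = ∠ C A A₁)
    (hB₁ : Sbtw ℝ A B₁ C) (hbisB : ∠ A B B₁ = ∠ C B B₁)
    (hang : ∠ B B₁ A₁ = Real.pi / 6) :
    ∠ A C B = Real.pi / 3 ∨ ∠ B A C = 2 * Real.pi / 3 := by
  have hnc : ¬Collinear ℝ {A, B, C} := affineIndependent_iff_not_collinear_set.mp hABC
  have hα := angle_pos_of_not_collinear (p₁ := B) (p₂ := A) (p₃ := C) (by rwa [Set.insert_comm])
  have hβ := angle_pos_of_not_collinear hnc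
  have hγ := angle_pos_of_not_collinear (p₁ := A) (p₂ := C) (p₃ := B) (by rwa [Set.pair_comm])
  have hsum : ∠ B A C + ∠ A B C + ∠ A C B = π := by
    linarith [angle_add_angle_add_angle_eq_pi C (ne₁₂_of_not_collinear hnc).symm,
      angle_comm B C A, angle_comm C A B]
  have hB₁A₁ : B₁ ≠ A₁ := by
    rintro rfl
    rw [angle_self_right] at hang
    linarith [pi_pos]
  have hδ : ∠ A₁ B₁ C = ∠ B A C + ∠ A B C / 2 - π / 6 := by
    have hext := exterior_angle_eq_angle_add_angle (p₃ := B) C hB₁.symm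
    rw [hB₁.angle_eq_right B, angle_comm B₁ B A] at hext
    linarith [angle_add_angle_eq_of_sbtw hA₁ (p := B₁), angle_add_angle_eq_of_sbtw hB₁ (p := B),
      angle_comm C B B₁]
  have hC : ∠ B₁ C A₁ = ∠ A C B := by
    rw [angle_comm, hA₁.symm.angle_eq_left, hB₁.symm.angle_eq_right, angle_comm]
  have hε : ∠ B₁ A₁ C = ∠ A B C / 2 + π / 6 := by
    linarith [angle_add_angle_add_angle_eq_pi C hB₁A₁, angle_comm C A₁ B₁]
  have hsinγ : sin (∠ A C B) = sin (∠ B A C + ∠ A B C) := by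
    rw [← sin_pi_sub, ← hsum, add_sub_cancel_right]
  have key := sin_mul_sin_add_sin_eq_of_angle_bisectors hnc hA₁ hbisA hB₁ hbisB
  rw [hδ, hε, hsinγ] at key
  rcases add_eq_two_pi_div_three_or_eq_of_sin_mul_eq hα hβ (by linarith) key with h | h
  · exact Or.inl (by linarith)
  · exact Or.inr h
end

section
/- If in triangle ABC the angle ∠BAC = 120° and AA₁ is the internal bisector from A (A₁ on BC), and B₁ is the foot of the internal bisector from B (B₁ on AC), then the line A₁B₁ bisects the angle ∠CA₁A, and A₁C₁ ⊥ A₁B₁ where C₁ is the foot of the internal bisector from C on AB. -/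
/-!
By the angle bisector theorem, `A₁ = (b • B + c • C) / (b + c)`, and an angle of `2π/3` at `A` makes
the bisector from `A` as short as `b c / (b + c)`, so `A₁A : A₁C = c : a`. The bisector from `B`
divides `AC` in the same ratio `c : a`, hence `A₁B₁` bisects `∠ C A₁ A`. Likewise `A₁C₁` bisects
`∠ B A₁ A`, and the bisectors of the supplementary angles `∠ C A₁ A` and `∠ A A₁ B` are perpendicular.
-/

open EuclideanGeometry

open Real
open scoped RealInnerProductSpace

namespace InnerProductGeometry

variable {V : Type*} [NormedAddCommGroup V] [InnerProductSpace ℝ V]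

/-- Points along the bisector of the angle between `x` and `y`: the diagonal of the rhombus with
sides `‖y‖ • x` and `‖x‖ • y`. -/
def bisectorDir (x y : V) : V := ‖y‖ • x + ‖x‖ • y

theorem angle_bisectorDir (x y : V) :
    angle x (bisectorDir x y) = angle y (bisectorDir x y) := by
  rcases eq_or_ne x 0 with rfl | hx
  · simp [bisectorDir]
  rcases eq_or_ne y 0 with rfl | hy
  · simp [bisectorDir]
  have inner_left : ⟪x, bisectorDir x y⟫ = ‖x‖ * (‖x‖ * ‖y‖ + ⟪x, y⟫) := by
    simp only [bisectorDir, inner_add_right, real_inner_smul_right, real_inner_self_eq_norm_sq]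
    ring
  have inner_right : ⟪y, bisectorDir x y⟫ = ‖y‖ * (‖x‖ * ‖y‖ + ⟪x, y⟫) := by
    simp only [bisectorDir, inner_add_right, real_inner_smul_right, real_inner_self_eq_norm_sq,
      real_inner_comm x y]
    ring
  unfold angle
  rw [inner_left, inner_right, mul_div_mul_left _ _ (norm_ne_zero_iff.mpr hx),
    mul_div_mul_left _ _ (norm_ne_zero_iff.mpr hy)]

theorem inner_bisectorDir_neg_left (x y : V) :
    ⟪bisectorDir x y, bisectorDir (-x) y⟫ = 0 := by
  rw [bisectorDir, bisectorDir, norm_neg, smul_neg, add_comm, neg_add_eq_sub,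
    real_inner_add_sub_eq_zero_iff, norm_smul, norm_smul, norm_norm, norm_norm, mul_comm]

theorem norm_bisectorDir_of_angle_eq_two_pi_div_three {x y : V}
    (h : angle x y = 2 * π / 3) : ‖bisectorDir x y‖ = ‖x‖ * ‖y‖ := by
  have hcos : Real.cos (angle x y) = -1 / 2 := by
    rw [h, show 2 * π / 3 = π - π / 3 by ring, Real.cos_pi_sub, Real.cos_pi_div_three]
    norm_num
  have hinner : ⟪x, y⟫ = -(‖x‖ * ‖y‖) / 2 := by
    rw [← cos_angle_mul_norm_mul_norm, hcos]
    ring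
  rw [← sq_eq_sq₀ (norm_nonneg _) (by positivity), bisectorDir, norm_add_sq_real, norm_smul,
    norm_smul, real_inner_smul_left, real_inner_smul_right, hinner, norm_norm, norm_norm]
  ring

end InnerProductGeometry

namespace EuclideanGeometry

open InnerProductGeometry

variable {V P : Type*} [NormedAddCommGroup V] [InnerProductSpace ℝ V] [MetricSpace P]
  [NormedAddTorsor V P]

/-- The point dividing segment `bc` in the ratio `dist a b : dist a c`, i.e. (angle bisector
theorem) the foot of the internal bisector from `a`. -/
noncomputable def bisectorFoot (a b c : P) : P :=
  AffineMap.lineMap b c (dist a b / (dist a b + dist a c))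

theorem eq_and_eq_of_dist_add_dist_eq_zero {a b c : P} (h : dist a b + dist a c = 0) :
    a = b ∧ a = c :=
  ⟨dist_eq_zero.mp (by linarith [dist_nonneg (x := a) (y := b), dist_nonneg (x := a) (y := c)]),
    dist_eq_zero.mp (by linarith [dist_nonneg (x := a) (y := b), dist_nonneg (x := a) (y := c)])⟩

theorem bisectorFoot_vsub (a b c : P) :
    bisectorFoot a b c -ᵥ a = (dist a b + dist a c)⁻¹ • bisectorDir (b -ᵥ a) (c -ᵥ a) := by
  rw [bisectorFoot, AffineMap.lineMap_apply, vadd_vsub_assoc, ← vsub_sub_vsub_cancel_right c b a,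
    bisectorDir, ← dist_eq_norm_vsub' V, ← dist_eq_norm_vsub' V]
  rcases eq_or_ne (dist a b + dist a c) 0 with h | h
  · obtain ⟨rfl, rfl⟩ := eq_and_eq_of_dist_add_dist_eq_zero h
    simp
  · match_scalars <;> field_simp
    ring

theorem dist_bisectorFoot_right (a b c : P) :
    dist (bisectorFoot a b c) c = dist a c * dist b c / (dist a b + dist a c) := by
  rw [bisectorFoot, dist_lineMap_right]
  rcases eq_or_ne (dist a b + dist a c) 0 with h | h
  · obtain ⟨rfl, rfl⟩ := eq_and_eq_of_dist_add_dist_eq_zero h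
    simp
  · rw [show 1 - dist a b / (dist a b + dist a c) = dist a c / (dist a b + dist a c) by
      field_simp; ring, Real.norm_of_nonneg (by positivity)]
    ring

theorem dist_bisectorFoot_of_angle_eq_two_pi_div_three {a b c : P} (h : ∠ b a c = 2 * π / 3) :
    dist a (bisectorFoot a b c) = dist a b * dist a c / (dist a b + dist a c) := by
  rw [dist_comm, dist_eq_norm_vsub V, bisectorFoot_vsub, norm_smul,
    norm_bisectorDir_of_angle_eq_two_pi_div_three h, norm_inv, Real.norm_of_nonneg (by positivity),
    ← dist_eq_norm_vsub' V, ← dist_eq_norm_vsub' V]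
  ring

theorem eq_bisectorFoot_of_angle_eq {p q r x : P} (h : ¬Collinear ℝ ({p, q, r} : Set P))
    (hx : Sbtw ℝ q x r) (hbis : ∠ q p x = ∠ r p x) : x = bisectorFoot p q r := by
  have h' : ¬Collinear ℝ ({q, p, r} : Set P) := by rwa [Set.insert_comm]
  obtain ⟨t, -, rfl⟩ := hx.wbtw
  have hw : AffineMap.lineMap q r t -ᵥ p = (1 - t) • (q -ᵥ p) + t • (r -ᵥ p) := by
    rw [AffineMap.lineMap_apply, vadd_vsub_assoc, ← vsub_sub_vsub_cancel_right r q p]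
    module
  have hw0 : (1 - t) • (q -ᵥ p) + t • (r -ᵥ p) ≠ 0 := by
    rw [← hw, vsub_ne_zero]
    rintro heq
    exact h' (heq ▸ hx.wbtw.collinear)
  have hu : q -ᵥ p ≠ 0 := vsub_ne_zero.mpr (ne₁₂_of_not_collinear h')
  have hv : r -ᵥ p ≠ 0 := vsub_ne_zero.mpr (ne₂₃_of_not_collinear h').symm
  have huv : ⟪q -ᵥ p, r -ᵥ p⟫ < ‖q -ᵥ p‖ * ‖r -ᵥ p‖ :=
    (real_inner_le_norm _ _).lt_of_ne
      (mt (inner_eq_mul_norm_iff_angle_eq_zero hu hv).1 (angle_ne_zero_of_not_collinear h'))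
  have hcos := congrArg Real.cos hbis
  rw [EuclideanGeometry.angle, EuclideanGeometry.angle, cos_angle, cos_angle, hw] at hcos
  rw [bisectorFoot, dist_eq_norm_vsub' V p q, dist_eq_norm_vsub' V p r]
  generalize q -ᵥ p = u at *
  generalize r -ᵥ p = v at *
  have hu' := norm_pos_iff.mpr hu
  have hv' := norm_pos_iff.mpr hv
  have hw' := norm_pos_iff.mpr hw0
  field_simp at hcos
  have key : (‖u‖ * ‖v‖ - ⟪u, v⟫) * ((1 - t) * ‖u‖ - t * ‖v‖) = 0 := by
    simp only [inner_add_right, real_inner_smul_right, real_inner_self_eq_norm_sq,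
      real_inner_comm u v] at hcos
    linear_combination hcos
  have ht := (mul_eq_zero.mp key).resolve_left (sub_pos.mpr huv).ne'
  congr 1
  rw [eq_div_iff (by positivity)]
  linarith

theorem angle_eq_of_vsub_eq_smul_bisectorDir {p q r x : P} {k : ℝ} (hk : 0 < k)
    (hx : x -ᵥ p = k • bisectorDir (q -ᵥ p) (r -ᵥ p)) : ∠ q p x = ∠ x p r := by
  rw [EuclideanGeometry.angle, EuclideanGeometry.angle, hx,
    InnerProductGeometry.angle_smul_right_of_pos _ _ hk, angle_bisectorDir,
    InnerProductGeometry.angle_comm, InnerProductGeometry.angle_smul_left_of_pos _ _ hk]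

theorem angle_eq_pi_div_two_of_vsub_eq_smul_bisectorDir {p x y : P} {u v : V} {k l : ℝ}
    (hx : x -ᵥ p = k • bisectorDir u v) (hy : y -ᵥ p = l • bisectorDir (-u) v) :
    ∠ x p y = π / 2 := by
  rw [EuclideanGeometry.angle, ← inner_eq_zero_iff_angle_eq_pi_div_two, hx, hy,
    real_inner_smul_left, real_inner_smul_right, inner_bisectorDir_neg_left, mul_zero, mul_zero]

end EuclideanGeometry

section TwoPiDivThree

open InnerProductGeometry

variable {V : Type*} [NormedAddCommGroup V] [InnerProductSpace ℝ V] {A B C : V}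

theorem bisectorFoot_sub_bisectorFoot_eq_smul_bisectorDir (hA : ∠ B A C = 2 * π / 3)
    (hAB : A ≠ B) (hAC : A ≠ C) :
    bisectorFoot B A C - bisectorFoot A B C =
      ((dist A B + dist A C) / (dist A C * (dist A B + dist B C))) •
        bisectorDir (C - bisectorFoot A B C) (A - bisectorFoot A B C) := by
  have hb := dist_pos.mpr hAC
  have hc := dist_pos.mpr hAB
  rw [bisectorDir, ← dist_eq_norm, ← dist_eq_norm, dist_comm C, dist_bisectorFoot_right,
    dist_bisectorFoot_of_angle_eq_two_pi_div_three hA, bisectorFoot, bisectorFoot, dist_comm B A]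
  simp only [AffineMap.lineMap_apply_module]
  match_scalars <;> field_simp <;> ring

theorem bisectorFoot_sub_bisectorFoot_eq_smul_bisectorDir_neg (hA : ∠ B A C = 2 * π / 3)
    (hAB : A ≠ B) (hAC : A ≠ C) :
    bisectorFoot C A B - bisectorFoot A B C =
      ((dist A B + dist A C) / (dist A C * (dist A C + dist B C))) •
        bisectorDir (-(C - bisectorFoot A B C)) (A - bisectorFoot A B C) := by
  have hb := dist_pos.mpr hAC
  have hc := dist_pos.mpr hAB
  rw [bisectorDir, norm_neg, ← dist_eq_norm, ← dist_eq_norm, dist_comm C, dist_bisectorFoot_right,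
    dist_bisectorFoot_of_angle_eq_two_pi_div_three hA, bisectorFoot, bisectorFoot, dist_comm C A,
    dist_comm C B]
  simp only [AffineMap.lineMap_apply_module]
  match_scalars <;> field_simp <;> ring

end TwoPiDivThree

theorem stmt15 (A B C A₁ B₁ C₁ : EuclideanSpace ℝ (Fin 2))
    (hABC : AffineIndependent ℝ ![A, B, C])
    (hA₁ : Sbtw ℝ B A₁ C) (hbisA : ∠ B A A₁ = ∠ C A A₁)
    (hB₁ : Sbtw ℝ A B₁ C) (hbisB : ∠ A B B₁ = ∠ C B B₁)
    (hC₁ : Sbtw ℝ A C₁ B) (hbisC : ∠ A C C₁ = ∠ B C C₁)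
    (hA : ∠ B A C = 2 * Real.pi / 3) :
    ∠ C A₁ B₁ = ∠ B₁ A₁ A ∧ ∠ B₁ A₁ C₁ = Real.pi / 2 := by
  have hABC' : ¬Collinear ℝ {A, B, C} := by rwa [← affineIndependent_iff_not_collinear_set]
  have hBAC : ¬Collinear ℝ {B, A, C} := by rwa [Set.insert_comm]
  have hCAB : ¬Collinear ℝ {C, A, B} := by rwa [Set.insert_comm, Set.pair_comm, Set.insert_comm]
  obtain rfl := eq_bisectorFoot_of_angle_eq hABC' hA₁ hbisA
  obtain rfl := eq_bisectorFoot_of_angle_eq hBAC hB₁ hbisB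
  obtain rfl := eq_bisectorFoot_of_angle_eq hCAB hC₁ hbisC
  have hAB := ne₁₂_of_not_collinear hABC'
  have hAC := ne₁₃_of_not_collinear hABC'
  have hBC := ne₂₃_of_not_collinear hABC'
  have hB₁A₁ := bisectorFoot_sub_bisectorFoot_eq_smul_bisectorDir hA hAB hAC
  have hC₁A₁ := bisectorFoot_sub_bisectorFoot_eq_smul_bisectorDir_neg hA hAB hAC
  refine ⟨angle_eq_of_vsub_eq_smul_bisectorDir ?_ hB₁A₁,
    angle_eq_pi_div_two_of_vsub_eq_smul_bisectorDir hB₁A₁ hC₁A₁⟩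
  have := dist_pos.mpr hAB
  have := dist_pos.mpr hAC
  have := dist_pos.mpr hBC
  positivity
end
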